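/- arXiv:1504.03761 — 5 statements merged into one kernel-verified Lean document; each statement's English description precedes it below -/
import Mathlib

section
/- For a real n×n matrix A, the spectral radius of A is less than 1 if and only if there exists a symmetric positive definite matrix P such that P − AᵀPA is positive definite. -/
/-!
If `A v = μ v` with `v ≠ 0` complex, then `v* (P - AᵀPA) v = (1 - |μ|²) v* P v`, and both
Hermitian forms have positive real part because a real positive definite form is positive on the
real and imaginary parts of `v`; hence `|μ| < 1`.

Conversely, if every eigenvalue lies in the open unit disc, Gelfand's formula makes `‖Aᵏ‖` decay
geometrically, so `P = ∑ₖ (Aᵏ)ᵀ Aᵏ` converges. It is symmetric, `xᵀ P x = ∑ₖ |Aᵏ x|² ≥ |x|²`, and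
the series telescopes to the Lyapunov equation `P - AᵀPA = 1`.
-/

open Matrix
/-- Spectral radius of a real square matrix: maximum modulus of its complex eigenvalues. -/
noncomputable def specRad {n : ℕ} (A : Matrix (Fin n) (Fin n) ℝ) : ℝ :=
  sSup {r : ℝ | ∃ μ : ℂ, μ ∈ spectrum ℂ (A.map (algebraMap ℝ ℂ)) ∧ r = ‖μ‖}

/-- A symmetric real matrix is positive definite: xᵀQx > 0 for all nonzero x. -/
def PosDefQuad {n : ℕ} (Q : Matrix (Fin n) (Fin n) ℝ) : Prop :=
  ∀ x : Fin n → ℝ, x ≠ 0 → 0 < x ⬝ᵥ Q.mulVec x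

open Filter
open scoped NNReal

theorem specRad_lt_iff {n : ℕ} (A : Matrix (Fin n) (Fin n) ℝ) {a : ℝ} (ha : 0 < a) :
    specRad A < a ↔ ∀ μ ∈ spectrum ℂ (A.map (algebraMap ℝ ℂ)), ‖μ‖ < a := by
  have hset : {r : ℝ | ∃ μ : ℂ, μ ∈ spectrum ℂ (A.map (algebraMap ℝ ℂ)) ∧ r = ‖μ‖} =
      (‖·‖) '' spectrum ℂ (A.map (algebraMap ℝ ℂ)) := by
    ext; simp [eq_comm]
  rw [specRad, hset]
  rcases (spectrum ℂ (A.map (algebraMap ℝ ℂ))).eq_empty_or_nonempty with he | hne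
  · rw [he, Set.image_empty, Real.sSup_empty]; simp [ha]
  · rw [((finite_spectrum _).image _).csSup_lt_iff (hne.image _), Set.forall_mem_image]

namespace spectrum

theorem spectralRadius_lt_of_forall_lt_of_pos {𝕜 A : Type*} [NormedField 𝕜] [ProperSpace 𝕜]
    [NormedRing A] [NormedAlgebra 𝕜 A] [CompleteSpace A] {a : A} {r : ℝ≥0} (hr : 0 < r)
    (h : ∀ z ∈ spectrum 𝕜 a, ‖z‖₊ < r) : spectralRadius 𝕜 a < r := by
  rcases (spectrum 𝕜 a).eq_empty_or_nonempty with he | hne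
  · simp [spectralRadius, he, hr]
  · exact spectralRadius_lt_of_forall_lt_of_nonempty hne h

variable {A : Type*} [NormedRing A] [NormedAlgebra ℂ A] [CompleteSpace A] {a : A}

theorem eventually_nnnorm_pow_le_of_spectralRadius_lt {r : ℝ≥0} (h : spectralRadius ℂ a < r) :
    ∀ᶠ k in atTop, ‖a ^ k‖₊ ≤ r ^ k := by
  filter_upwards [(pow_nnnorm_pow_one_div_tendsto_nhds_spectralRadius a).eventually_lt_const h,
    eventually_ge_atTop 1] with k hk hk1
  have hk0 : (k : ℝ) ≠ 0 := by positivity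
  have hpow := ENNReal.rpow_le_rpow hk.le (z := k) (by positivity)
  rw [← ENNReal.rpow_mul, one_div_mul_cancel hk0, ENNReal.rpow_one,
    ENNReal.rpow_natCast] at hpow
  exact_mod_cast hpow

theorem summable_norm_pow_of_spectralRadius_lt_one (h : spectralRadius ℂ a < 1) :
    Summable fun k => ‖a ^ k‖ := by
  obtain ⟨r, hr, hr1⟩ := ENNReal.lt_iff_exists_nnreal_btwn.mp h
  refine .of_norm_bounded_eventually_nat
    (summable_geometric_of_lt_one r.2 (by exact_mod_cast hr1)) ?_
  filter_upwards [eventually_nnnorm_pow_le_of_spectralRadius_lt hr] with k hk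
  simpa using NNReal.coe_le_coe.mpr hk

end spectrum

namespace Matrix

section Frobenius

/- The Frobenius norm is used because it is submultiplicative and invariant both under
transposition and under the entrywise embedding `ℝ → ℂ`. -/
attribute [local instance] frobeniusNormedRing frobeniusNormedAlgebra

theorem summable_transpose_pow_mul_pow {ι : Type*} [Fintype ι] [DecidableEq ι]
    {A : Matrix ι ι ℝ} (h : ∀ μ ∈ spectrum ℂ (A.map (algebraMap ℝ ℂ)), ‖μ‖ < 1) :
    Summable fun k => (A ^ k)ᵀ * A ^ k := by
  have hρ : spectralRadius ℂ (A.map (algebraMap ℝ ℂ)) < 1 :=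
    spectrum.spectralRadius_lt_of_forall_lt_of_pos one_pos fun μ hμ => by
      exact_mod_cast h μ hμ
  have hsum : Summable fun k => ‖A ^ k‖ := by
    refine (spectrum.summable_norm_pow_of_spectralRadius_lt_one hρ).congr fun k => ?_
    rw [← Matrix.map_pow, frobenius_norm_map_eq _ _ (by simp)]
  refine .of_norm_bounded_eventually_nat hsum ?_
  filter_upwards [hsum.tendsto_atTop_zero.eventually_le_const one_pos] with k hk
  calc ‖(A ^ k)ᵀ * A ^ k‖ ≤ ‖(A ^ k)ᵀ‖ * ‖A ^ k‖ := frobenius_norm_mul _ _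
    _ = ‖A ^ k‖ * ‖A ^ k‖ := by rw [frobenius_norm_transpose]
    _ ≤ ‖A ^ k‖ := mul_le_of_le_one_left (norm_nonneg _) hk

end Frobenius

theorem tsum_transpose_pow_mul_pow_sub_eq_one {ι R : Type*} [Fintype ι] [DecidableEq ι]
    [CommRing R] [TopologicalSpace R] [IsTopologicalRing R] [T2Space R] {A : Matrix ι ι R}
    (h : Summable fun k => (A ^ k)ᵀ * A ^ k) :
    (∑' k, (A ^ k)ᵀ * A ^ k) - Aᵀ * (∑' k, (A ^ k)ᵀ * A ^ k) * A = 1 := by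
  have hshift : HasSum (fun k => (A ^ (k + 1))ᵀ * A ^ (k + 1))
      (Aᵀ * (∑' k, (A ^ k)ᵀ * A ^ k) * A) := by
    simpa only [pow_succ, transpose_mul, Matrix.mul_assoc] using
      (h.hasSum.mul_left Aᵀ).mul_right A
  rw [hshift.unique ((hasSum_nat_add_iff' 1).mpr h.hasSum)]
  simp

theorem dotProduct_transpose_mul_mulVec {m n R : Type*} [Fintype m] [Fintype n]
    [CommSemiring R] (B : Matrix m n R) (x y : n → R) :
    x ⬝ᵥ (Bᵀ * B) *ᵥ y = B *ᵥ x ⬝ᵥ B *ᵥ y := by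
  rw [← mulVec_mulVec, dotProduct_transpose_mulVec, dotProduct_comm]

theorem re_star_dotProduct_map_mulVec {ι : Type*} [Fintype ι] (Q : Matrix ι ι ℝ)
    (v : ι → ℂ) :
    (star v ⬝ᵥ Q.map (algebraMap ℝ ℂ) *ᵥ v).re =
      (fun i => (v i).re) ⬝ᵥ Q *ᵥ (fun i => (v i).re) +
        (fun i => (v i).im) ⬝ᵥ Q *ᵥ (fun i => (v i).im) := by
  simp only [dotProduct, mulVec, Finset.mul_sum, ← Finset.sum_add_distrib, Complex.re_sum]
  refine Finset.sum_congr rfl fun i _ => Finset.sum_congr rfl fun j _ => ?_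
  simp [Complex.mul_re, Complex.mul_im]

end Matrix

section PosDefQuad

variable {n : ℕ}

theorem posDefQuad_tsum_transpose_pow_mul_pow {A : Matrix (Fin n) (Fin n) ℝ}
    (h : Summable fun k => (A ^ k)ᵀ * A ^ k) : PosDefQuad (∑' k, (A ^ k)ᵀ * A ^ k) := by
  intro x hx
  let quadForm : Matrix (Fin n) (Fin n) ℝ →+ ℝ :=
    AddMonoidHom.mk' (fun Q => x ⬝ᵥ Q *ᵥ x) fun Q Q' => by simp [add_mulVec, dotProduct_add]
  have hsum := h.hasSum.map quadForm
    (continuous_const.dotProduct (continuous_id.matrix_mulVec continuous_const))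
  simp only [quadForm, Function.comp_def, AddMonoidHom.mk'_apply,
    dotProduct_transpose_mul_mulVec] at hsum
  calc 0 < x ⬝ᵥ x := by simpa using dotProduct_star_self_pos_iff.mpr hx
    _ = A ^ 0 *ᵥ x ⬝ᵥ A ^ 0 *ᵥ x := by simp
    _ ≤ _ := le_hasSum hsum 0 fun k _ => by
      simpa using dotProduct_star_self_nonneg (A ^ k *ᵥ x)

theorem PosDefQuad.nonneg {Q : Matrix (Fin n) (Fin n) ℝ} (hQ : PosDefQuad Q)
    (x : Fin n → ℝ) : 0 ≤ x ⬝ᵥ Q *ᵥ x := by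
  rcases eq_or_ne x 0 with rfl | hx
  · simp
  · exact (hQ x hx).le

theorem PosDefQuad.re_star_dotProduct_map_mulVec_pos {Q : Matrix (Fin n) (Fin n) ℝ}
    (hQ : PosDefQuad Q) {v : Fin n → ℂ} (hv : v ≠ 0) :
    0 < (star v ⬝ᵥ Q.map (algebraMap ℝ ℂ) *ᵥ v).re := by
  rw [re_star_dotProduct_map_mulVec]
  by_cases hre : (fun i => (v i).re) = 0
  · have him : (fun i => (v i).im) ≠ 0 := fun him =>
      hv <| funext fun i => Complex.ext (congrFun hre i) (congrFun him i)
    linarith [hQ.nonneg fun i => (v i).re, hQ _ him]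
  · linarith [hQ _ hre, hQ.nonneg fun i => (v i).im]

theorem norm_lt_one_of_mem_spectrum_of_posDefQuad {A P : Matrix (Fin n) (Fin n) ℝ}
    (hP : PosDefQuad P) (hQ : PosDefQuad (P - Aᵀ * P * A)) {μ : ℂ}
    (hμ : μ ∈ spectrum ℂ (A.map (algebraMap ℝ ℂ))) : ‖μ‖ < 1 := by
  set M := A.map (algebraMap ℝ ℂ)
  obtain ⟨v, hv⟩ := (Module.End.HasEigenvalue.of_mem_spectrum
    (by rwa [spectrum_toLin'] : μ ∈ spectrum ℂ M.toLin')).exists_hasEigenvector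
  have hMv : M *ᵥ v = μ • v := hv.apply_eq_smul
  have hMH : Mᴴ = Aᵀ.map (algebraMap ℝ ℂ) := by ext; simp [M]
  have hform : star v ⬝ᵥ (Aᵀ * P * A).map (algebraMap ℝ ℂ) *ᵥ v =
      ‖μ‖ ^ 2 * (star v ⬝ᵥ P.map (algebraMap ℝ ℂ) *ᵥ v) := by
    rw [Matrix.map_mul, Matrix.map_mul, ← hMH, ← mulVec_mulVec, ← mulVec_mulVec,
      dotProduct_mulVec, ← star_mulVec, hMv, star_smul, mulVec_smul, smul_dotProduct,
      dotProduct_smul, smul_eq_mul, smul_eq_mul, ← mul_assoc, Complex.star_def,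
      Complex.conj_mul']
  have hdiff : (star v ⬝ᵥ (P - Aᵀ * P * A).map (algebraMap ℝ ℂ) *ᵥ v).re =
      (1 - ‖μ‖ ^ 2) * (star v ⬝ᵥ P.map (algebraMap ℝ ℂ) *ᵥ v).re := by
    rw [Matrix.map_sub _ (map_sub _), sub_mulVec, dotProduct_sub, hform, Complex.sub_re,
      ← Complex.ofReal_pow, Complex.re_ofReal_mul]
    ring
  have hpos := hQ.re_star_dotProduct_map_mulVec_pos hv.2
  rw [hdiff] at hpos
  have hsq : ‖μ‖ ^ 2 < 1 := by
    nlinarith [hP.re_star_dotProduct_map_mulVec_pos hv.2]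
  exact (sq_lt_one_iff₀ (norm_nonneg μ)).mp hsq

end PosDefQuad

theorem stmt_0 {n : ℕ} (A : Matrix (Fin n) (Fin n) ℝ) :
    specRad A < 1 ↔
      ∃ P : Matrix (Fin n) (Fin n) ℝ, P.IsSymm ∧ PosDefQuad P ∧
        PosDefQuad (P - Aᵀ * P * A) := by
  rw [specRad_lt_iff A one_pos]
  constructor
  · intro h
    have hsum := summable_transpose_pow_mul_pow h
    refine ⟨_, by simp [IsSymm, transpose_tsum], posDefQuad_tsum_transpose_pow_mul_pow hsum, ?_⟩
    rw [tsum_transpose_pow_mul_pow_sub_eq_one hsum]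
    intro x hx
    simpa using dotProduct_star_self_pos_iff.mpr hx
  · rintro ⟨P, -, hP, hQ⟩ μ hμ
    exact norm_lt_one_of_mem_spectrum_of_posDefQuad hP hQ hμ
end

section
/- Let V: ℝⁿ → ℝ be continuous, positive definite (V(x) > 0 for x ≠ 0, V(0) = 0), and positively homogeneous of some degree d > 0, and suppose V(A_i x) < V(x) for all nonzero x and all matrices A_i in a finite set Σ. Then for every x₀ ∈ ℝⁿ and every switching sequence σ: ℕ → {1,…,m}, the trajectory x_{k+1} = A_{σ(k)} x_k converges to the origin. -/
open Matrix

/-!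
Compactness of the unit sphere and homogeneity of `V` upgrade the pointwise decrease
`V (A x) < V x` to a uniform contraction `V (A x) ≤ c * V x` with `c < 1` (the maximum of the
continuous ratio `V (A u) / V u` over the sphere), so `V` decays geometrically along every
trajectory. The same two ingredients give `a * ‖x‖ ^ d ≤ V x` with `a > 0` the minimum of `V` on
the sphere, so `V (x k) → 0` forces `x k → 0`.
-/

open Filter Metric Set Topology

section HomogeneousLyapunov

variable {E : Type*} [NormedAddCommGroup E] [NormedSpace ℝ E] {V : E → ℝ} {d : ℝ}

lemma exists_pos_smul_mem_sphere {x : E} (hx : x ≠ 0) :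
    ∃ r : ℝ, 0 < r ∧ ∃ u ∈ sphere (0 : E) 1, x = r • u :=
  ⟨‖x‖, norm_pos_iff.2 hx, ‖x‖⁻¹ • x, by simpa using norm_smul_inv_norm (𝕜 := ℝ) hx,
    (smul_inv_smul₀ (norm_ne_zero_iff.2 hx) x).symm⟩

lemma exists_pos_mul_norm_rpow_le [ProperSpace E] (hd : 0 < d) (hcont : Continuous V)
    (hV0 : V 0 = 0) (hpos : ∀ x, x ≠ 0 → 0 < V x)
    (hhom : ∀ r : ℝ, 0 < r → ∀ x, V (r • x) = r ^ d * V x) :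
    ∃ a > 0, ∀ x, a * ‖x‖ ^ d ≤ V x := by
  obtain ⟨a, ha, hle⟩ := (isCompact_sphere (0 : E) 1).exists_forall_le' hcont.continuousOn
    fun u hu => hpos u (ne_zero_of_mem_unit_sphere ⟨u, hu⟩)
  refine ⟨a, ha, fun x => ?_⟩
  rcases eq_or_ne x 0 with rfl | hx
  · simp [hV0, Real.zero_rpow hd.ne']
  obtain ⟨r, hr, u, hu, rfl⟩ := exists_pos_smul_mem_sphere hx
  rw [hhom r hr, norm_smul, mem_sphere_zero_iff_norm.1 hu, mul_one, Real.norm_of_nonneg hr.le,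
    mul_comm]
  exact mul_le_mul_of_nonneg_left (hle u hu) (by positivity)

lemma tendsto_zero_of_tendsto_apply_zero [ProperSpace E] (hd : 0 < d) (hcont : Continuous V)
    (hV0 : V 0 = 0) (hpos : ∀ x, x ≠ 0 → 0 < V x)
    (hhom : ∀ r : ℝ, 0 < r → ∀ x, V (r • x) = r ^ d * V x)
    {ι : Type*} {l : Filter ι} {x : ι → E} (hVx : Tendsto (fun i => V (x i)) l (𝓝 0)) :
    Tendsto x l (𝓝 0) := by
  obtain ⟨a, ha, hle⟩ := exists_pos_mul_norm_rpow_le hd hcont hV0 hpos hhom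
  have hbound : ∀ i, ‖x i‖ ≤ (V (x i) / a) ^ d⁻¹ := fun i =>
    (Real.le_rpow_inv_iff_of_pos (norm_nonneg _)
      (div_nonneg ((by positivity : 0 ≤ a * ‖x i‖ ^ d).trans (hle _)) ha.le) hd).2
      ((le_div_iff₀' ha).2 (hle _))
  rw [tendsto_zero_iff_norm_tendsto_zero]
  exact squeeze_zero (fun _ => norm_nonneg _) hbound
    ((zero_div a ▸ hVx.div_const a).rpow_const_nhds_zero (inv_pos.2 hd))

lemma eventually_forall_apply_le_mul [ProperSpace E] (hcont : Continuous V) (hV0 : V 0 = 0)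
    (hpos : ∀ x, x ≠ 0 → 0 < V x) (hhom : ∀ r : ℝ, 0 < r → ∀ x, V (r • x) = r ^ d * V x)
    (f : E →L[ℝ] E) (hf : ∀ x, x ≠ 0 → V (f x) < V x) :
    ∀ᶠ c in 𝓝[<] 1, ∀ x, V (f x) ≤ c * V x := by
  have hsphere : ∀ u ∈ sphere (0 : E) 1, 0 < V u :=
    fun u hu => hpos u (ne_zero_of_mem_unit_sphere ⟨u, hu⟩)
  -- `exists_forall_le'` read in `ℝᵒᵈ` is its upper-bound counterpart
  obtain ⟨c₀, hc₀, hle⟩ : ∃ c₀ < 1, ∀ u ∈ sphere (0 : E) 1, V (f u) / V u ≤ c₀ :=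
    (isCompact_sphere (0 : E) 1).exists_forall_le' (α := ℝᵒᵈ)
      ((hcont.comp f.continuous).continuousOn.div hcont.continuousOn
        fun u hu => (hsphere u hu).ne')
      fun u hu => (div_lt_one (hsphere u hu)).2 (hf u (ne_zero_of_mem_unit_sphere ⟨u, hu⟩))
  filter_upwards [Ioo_mem_nhdsLT hc₀] with c hc x
  rcases eq_or_ne x 0 with rfl | hx
  · simp [hV0]
  obtain ⟨r, hr, u, hu, rfl⟩ := exists_pos_smul_mem_sphere hx
  have hVu := hsphere u hu
  rw [map_smul, hhom r hr, hhom r hr, mul_left_comm]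
  gcongr
  calc V (f u) ≤ c₀ * V u := (div_le_iff₀ hVu).1 (hle u hu)
    _ ≤ c * V u := mul_le_mul_of_nonneg_right hc.1.le hVu.le

end HomogeneousLyapunov

/-- A common Lyapunov function (continuous, positive definite, positively homogeneous
of positive degree, strictly decreasing along all modes) implies convergence of all
trajectories of the switched system to the origin. -/
theorem stmt_8 {n m : ℕ} (A : Fin m → Matrix (Fin n) (Fin n) ℝ)
    (V : (Fin n → ℝ) → ℝ) (d : ℝ) (hd : 0 < d)
    (hcont : Continuous V) (hV0 : V 0 = 0)
    (hpos : ∀ x : Fin n → ℝ, x ≠ 0 → 0 < V x)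
    (hhom : ∀ (l : ℝ), 0 < l → ∀ x, V (l • x) = l ^ d * V x)
    (hdec : ∀ (i : Fin m) (x : Fin n → ℝ), x ≠ 0 → V ((A i).mulVec x) < V x) :
    ∀ (σ : ℕ → Fin m) (x : ℕ → (Fin n → ℝ)),
      (∀ k, x (k + 1) = (A (σ k)).mulVec (x k)) →
      Filter.Tendsto x Filter.atTop (nhds 0) := by
  intro σ x hx
  have hVnonneg : ∀ y, 0 ≤ V y := fun y => by
    rcases eq_or_ne y 0 with rfl | hy
    exacts [hV0.ge, (hpos y hy).le]
  obtain ⟨c, ⟨hc0, hc1⟩, hc⟩ : ∃ c ∈ Ioo (0 : ℝ) 1, ∀ i y, V (A i *ᵥ y) ≤ c * V y := by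
    have hmodes := eventually_all.2 fun i => eventually_forall_apply_le_mul hcont hV0 hpos hhom
      (LinearMap.toContinuousLinearMap (toLin' (A i))) (by simpa using hdec i)
    simpa using (Eventually.and (Ioo_mem_nhdsLT (zero_lt_one' ℝ)) hmodes).exists
  have hgeom : ∀ k, V (x k) ≤ c ^ k * V (x 0) := fun k =>
    le_geom (u := fun k => V (x k)) hc0.le k fun j _ => hx j ▸ hc _ _
  have hVx : Tendsto (fun k => V (x k)) atTop (𝓝 0) :=
    squeeze_zero (fun k => hVnonneg _) hgeom
      (by simpa using (tendsto_pow_atTop_nhds_zero_of_lt_one hc0.le hc1).mul_const (V (x 0)))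
  exact tendsto_zero_of_tendsto_apply_zero hd hcont hV0 hpos hhom hVx
end

section
/- Let A₁ = [[1,1],[0,1]] and A₂ = [[1,0],[1,1]]. For every nonzero x ∈ ℝ², the set of normalized vectors {Ax/‖Ax‖ : A a finite product of matrices from {A₁, A₂}} is infinite. -/
open Matrix

/-!
The shear `A₁ = !![1, 1; 0, 1]` fixes the second coordinate and moves the first one by it:
`A₁ᵏ x = (x₀ + k x₁, x₁)`. If `x₁ ≠ 0` these vectors are pairwise distinct and share the nonzero
coordinate `x₁`, which pins down the scale, so their normalizations are pairwise distinct too.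
If `x₀ ≠ 0`, the same argument runs with `A₂ = !![1, 0; 1, 1]`.
-/

/-- The Euclidean norm on ℝ². -/
noncomputable def enorm {n : ℕ} (x : Fin n → ℝ) : ℝ :=
  Real.sqrt (∑ i, x i ^ 2)

lemma enorm_eq_norm_toLp {n : ℕ} (x : Fin n → ℝ) :
    _root_.enorm x = ‖WithLp.toLp 2 x‖ := by
  simp [_root_.enorm, EuclideanSpace.norm_eq]

lemma enorm_pos_of_ne_zero {n : ℕ} {x : Fin n → ℝ} (hx : x ≠ 0) : 0 < _root_.enorm x := by
  rw [enorm_eq_norm_toLp, norm_pos_iff]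
  exact fun h => hx (by simpa using congrArg WithLp.ofLp h)

lemma eq_of_inv_enorm_smul_eq {n : ℕ} {v w : Fin n → ℝ} (i : Fin n) (hvi : v i ≠ 0)
    (hi : v i = w i) (h : (_root_.enorm v)⁻¹ • v = (_root_.enorm w)⁻¹ • w) : v = w := by
  have hw : 0 < _root_.enorm w := enorm_pos_of_ne_zero fun h0 => hvi (by simp [hi, h0])
  have hnorm : (_root_.enorm v)⁻¹ = (_root_.enorm w)⁻¹ := by
    have := congrFun h i
    simp only [Pi.smul_apply, smul_eq_mul, ← hi] at this
    exact mul_right_cancel₀ hvi this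
  rw [hnorm] at h
  exact smul_right_injective _ (inv_ne_zero hw.ne') h

lemma pow_upper_mulVec (k : ℕ) (x : Fin 2 → ℝ) :
    (!![1, 1; 0, 1] : Matrix (Fin 2) (Fin 2) ℝ) ^ k *ᵥ x = ![x 0 + k * x 1, x 1] := by
  suffices (!![1, 1; 0, 1] : Matrix (Fin 2) (Fin 2) ℝ) ^ k = !![1, (k : ℝ); 0, 1] by
    rw [this]; ext i; fin_cases i <;> simp [mulVec, dotProduct]
  induction k with
  | zero => simp [one_fin_two]
  | succ n ih => rw [pow_succ, ih, mul_fin_two]; push_cast; norm_num [add_comm]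

lemma pow_lower_mulVec (k : ℕ) (x : Fin 2 → ℝ) :
    (!![1, 0; 1, 1] : Matrix (Fin 2) (Fin 2) ℝ) ^ k *ᵥ x = ![x 0, k * x 0 + x 1] := by
  suffices (!![1, 0; 1, 1] : Matrix (Fin 2) (Fin 2) ℝ) ^ k = !![1, 0; (k : ℝ), 1] by
    rw [this]; ext i; fin_cases i <;> simp [mulVec, dotProduct]
  induction k with
  | zero => simp [one_fin_two]
  | succ n ih => rw [pow_succ, ih, mul_fin_two]; push_cast; norm_num [add_comm]

def normalizedOrbit (x : Fin 2 → ℝ) : Set (Fin 2 → ℝ) :=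
  {y | ∃ l : List (Matrix (Fin 2) (Fin 2) ℝ), l ≠ [] ∧
    (∀ B ∈ l, B = !![1, 1; 0, 1] ∨ B = !![1, 0; 1, 1]) ∧
    y = (_root_.enorm (l.prod.mulVec x))⁻¹ • l.prod.mulVec x}

lemma normalizedOrbit_infinite_of_pow {x : Fin 2 → ℝ} {M : Matrix (Fin 2) (Fin 2) ℝ}
    (hM : M = !![1, 1; 0, 1] ∨ M = !![1, 0; 1, 1]) (i : Fin 2) (hxi : x i ≠ 0)
    (hfix : ∀ k : ℕ, (M ^ k *ᵥ x) i = x i) (hinj : Function.Injective fun k : ℕ => M ^ k *ᵥ x) :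
    (normalizedOrbit x).Infinite := by
  refine Set.infinite_of_injective_forall_mem
    (f := fun k : ℕ => (_root_.enorm (M ^ (k + 1) *ᵥ x))⁻¹ • M ^ (k + 1) *ᵥ x) ?_ ?_
  · intro m n h
    have := eq_of_inv_enorm_smul_eq i (by rwa [hfix]) (by rw [hfix, hfix]) h
    exact Nat.succ_injective (hinj this)
  · intro k
    refine ⟨List.replicate (k + 1) M, by simp, fun B hB => ?_, by rw [List.prod_replicate]⟩
    rwa [List.eq_of_mem_replicate hB]

theorem stmt_9 (x : Fin 2 → ℝ) (hx : x ≠ 0) :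
    Set.Infinite {y : Fin 2 → ℝ |
      ∃ l : List (Matrix (Fin 2) (Fin 2) ℝ), l ≠ [] ∧
        (∀ B ∈ l, B = !![1, 1; 0, 1] ∨ B = !![1, 0; 1, 1]) ∧
        y = (_root_.enorm (l.prod.mulVec x))⁻¹ • l.prod.mulVec x} := by
  change (normalizedOrbit x).Infinite
  obtain h0 | h1 : x 0 ≠ 0 ∨ x 1 ≠ 0 := by
    by_contra! h
    exact hx (by ext i; fin_cases i <;> simp [h.1, h.2])
  · refine normalizedOrbit_infinite_of_pow (Or.inr rfl) 0 h0
      (fun k => by rw [pow_lower_mulVec]; rfl) fun m n h => ?_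
    have := congrFun h 1
    simp only [pow_lower_mulVec] at this
    simpa [h0] using this
  · refine normalizedOrbit_infinite_of_pow (Or.inl rfl) 1 h1
      (fun k => by rw [pow_upper_mulVec]; rfl) fun m n h => ?_
    have := congrFun h 0
    simp only [pow_upper_mulVec] at this
    simpa [h1] using this
end

section
/- Let V: ℝⁿ → ℝ be continuous, positive definite and homogeneous, and let Σ = {A₁,…,A_m} be a finite set of matrices with joint spectral radius ρ(Σ) = 1 satisfying V(A_i x) ≤ V(x) for all x ∈ ℝⁿ and all i. Then there exists a point x* with V(x*) = 1 and an infinite sequence of indices i₁, i₂, … in {1,…,m} such that V(A_{i_t}⋯A_{i₁} x*) = 1 for all t ≥ 1. -/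
open Matrix

/-- The entrywise ℓ¹ matrix norm (a submultiplicative matrix norm). -/
noncomputable def mnorm {n : ℕ} (A : Matrix (Fin n) (Fin n) ℝ) : ℝ :=
  ∑ i, ∑ j, |A i j|

/-- The product A_{w 0} * A_{w 1} * ⋯ * A_{w (k-1)} of matrices from the family `A`. -/
noncomputable def wordProd {n m : ℕ} (A : Fin m → Matrix (Fin n) (Fin n) ℝ)
    {k : ℕ} (w : Fin k → Fin m) : Matrix (Fin n) (Fin n) ℝ :=
  (List.ofFn fun i => A (w i)).prod

/-- ρ_k(Σ): the maximum over length-k products of the k-th root of their norm. -/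
noncomputable def rhoK {n m : ℕ} (A : Fin m → Matrix (Fin n) (Fin n) ℝ) (k : ℕ) : ℝ :=
  sSup {r : ℝ | ∃ w : Fin k → Fin m, r = mnorm (wordProd A w) ^ ((1 : ℝ) / k)}

/-- The joint spectral radius, realized as inf over k ≥ 1 of ρ_k (which equals
lim_{k→∞} ρ_k for submultiplicative norms). -/
noncomputable def jsr {n m : ℕ} (A : Fin m → Matrix (Fin n) (Fin n) ℝ) : ℝ :=
  ⨅ k : ℕ, rhoK A (k + 1)

/-!
Along every switching sequence `V` is non-increasing, so the pairs (x, σ) with `V x = 1` whose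
trajectory keeps `V = 1` for the first `k` steps form a decreasing sequence of closed subsets of the
compact space `{V = 1} × (ℕ → Fin m)`; it suffices to show each is nonempty. If one were empty,
compactness would give a uniform `η < 1` with `V (x_k) ≤ η V (x_0)` along all trajectories, so every
product of `j k` matrices would shrink `V` by `η ^ j`. Since `V` dominates a positive multiple of
`‖·‖ ^ d`, long products would then have norm `< 1`, contradicting `ρ(Σ) = 1`.
-/

namespace SwitchedSystem

variable {n m : ℕ}

lemma mnorm_nonneg (P : Matrix (Fin n) (Fin n) ℝ) : 0 ≤ mnorm P := by
  unfold mnorm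
  positivity

lemma rhoK_nonneg (A : Fin m → Matrix (Fin n) (Fin n) ℝ) (k : ℕ) : 0 ≤ rhoK A k :=
  Real.sSup_nonneg fun _ ⟨_, hr⟩ => hr ▸ Real.rpow_nonneg (mnorm_nonneg _) _

lemma jsr_le_rhoK (A : Fin m → Matrix (Fin n) (Fin n) ℝ) (k : ℕ) : jsr A ≤ rhoK A (k + 1) :=
  ciInf_le ⟨0, Set.forall_mem_range.2 fun j => rhoK_nonneg A (j + 1)⟩ k

lemma exists_rhoK_eq (hm : 0 < m) (A : Fin m → Matrix (Fin n) (Fin n) ℝ) (k : ℕ) :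
    ∃ w : Fin k → Fin m, mnorm (wordProd A w) ^ ((1 : ℝ) / k) = rhoK A k := by
  have : Nonempty (Fin m) := ⟨⟨0, hm⟩⟩
  have hrange : {r : ℝ | ∃ w : Fin k → Fin m, r = mnorm (wordProd A w) ^ ((1 : ℝ) / k)} =
      Set.range fun w : Fin k → Fin m => mnorm (wordProd A w) ^ ((1 : ℝ) / k) := by
    ext
    simp only [Set.mem_ofPred_eq, Set.mem_range, eq_comm]
  rw [rhoK, hrange]
  exact (Set.range_nonempty _).csSup_mem (Set.finite_range _)

lemma exists_one_le_mnorm_wordProd (hm : 0 < m) (A : Fin m → Matrix (Fin n) (Fin n) ℝ)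
    (hjsr : 1 ≤ jsr A) {k : ℕ} (hk : 0 < k) : ∃ w : Fin k → Fin m, 1 ≤ mnorm (wordProd A w) := by
  obtain ⟨k, rfl⟩ : ∃ j, k = j + 1 := ⟨k - 1, by omega⟩
  obtain ⟨w, hw⟩ := exists_rhoK_eq hm A (k + 1)
  refine ⟨w, not_lt.1 fun hlt => ?_⟩
  have := Real.rpow_lt_one (mnorm_nonneg _) hlt (by positivity : (0 : ℝ) < 1 / ((k + 1 : ℕ) : ℝ))
  linarith [jsr_le_rhoK A k]

def trajectory (A : Fin m → Matrix (Fin n) (Fin n) ℝ) (s : ℕ → Fin m) (x : Fin n → ℝ) :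
    ℕ → Fin n → ℝ
  | 0 => x
  | t + 1 => A (s t) *ᵥ trajectory A s x t

variable (A : Fin m → Matrix (Fin n) (Fin n) ℝ)

lemma trajectory_add (s : ℕ → Fin m) (x : Fin n → ℝ) (a t : ℕ) :
    trajectory A s x (a + t) = trajectory A (fun r => s (a + r)) (trajectory A s x a) t := by
  induction t with
  | zero => rfl
  | succ t ih => rw [← Nat.add_assoc, trajectory, trajectory, ih]

lemma trajectory_smul (s : ℕ → Fin m) (x : Fin n → ℝ) (c : ℝ) (t : ℕ) :
    trajectory A s (c • x) t = c • trajectory A s x t := by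
  induction t with
  | zero => rfl
  | succ t ih => simp only [trajectory, ih, mulVec_smul]

lemma trajectory_congr {s s' : ℕ → Fin m} (x : Fin n → ℝ) {t : ℕ} (h : ∀ r < t, s r = s' r) :
    trajectory A s x t = trajectory A s' x t := by
  induction t with
  | zero => rfl
  | succ t ih => simp only [trajectory, h t t.lt_succ_self, ih fun r hr => h r (by omega)]

lemma continuous_trajectory (t : ℕ) :
    Continuous fun p : (Fin n → ℝ) × (ℕ → Fin m) => trajectory A p.2 p.1 t := by
  induction t with
  | zero => exact continuous_fst
  | succ t ih =>
    have hswitch : Continuous fun p : (Fin n → ℝ) × (ℕ → Fin m) => A (p.2 t) :=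
      continuous_of_discreteTopology.comp ((continuous_apply t).comp continuous_snd)
    exact hswitch.matrix_mulVec ih

lemma antitone_trajectory {V : (Fin n → ℝ) → ℝ} (hdec : ∀ i x, V (A i *ᵥ x) ≤ V x)
    (s : ℕ → Fin m) (x : Fin n → ℝ) : Antitone fun t => V (trajectory A s x t) :=
  antitone_nat_of_succ_le fun t => hdec (s t) _

def seqOfWord (hm : 0 < m) {k : ℕ} (w : Fin k → Fin m) : ℕ → Fin m :=
  fun t => if h : t < k then w (Fin.rev ⟨t, h⟩) else ⟨0, hm⟩

lemma wordProd_succ {k : ℕ} (w : Fin (k + 1) → Fin m) :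
    wordProd A w = A (w 0) * wordProd A (fun i => w i.succ) := by
  simp [wordProd, List.ofFn_succ]

lemma trajectory_seqOfWord (hm : 0 < m) {k : ℕ} (w : Fin k → Fin m) (x : Fin n → ℝ) :
    trajectory A (seqOfWord hm w) x k = wordProd A w *ᵥ x := by
  induction k with
  | zero => simp [trajectory, wordProd]
  | succ k ih =>
    have hinit : trajectory A (seqOfWord hm w) x k =
        trajectory A (seqOfWord hm fun i => w i.succ) x k :=
      trajectory_congr A x fun r hr => by
        simp only [seqOfWord, dif_pos hr, dif_pos (hr.trans k.lt_succ_self)]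
        exact congrArg w (Fin.rev_castSucc ⟨r, hr⟩)
    have hlast : seqOfWord hm w k = w 0 := by
      simp only [seqOfWord, dif_pos k.lt_succ_self]
      exact congrArg w (Fin.ext (by simp))
    rw [trajectory, hinit, hlast, ih, mulVec_mulVec, ← wordProd_succ]

end SwitchedSystem

lemma norm_le_of_le_mul_rpow {E : Type*} [NormedAddCommGroup E] {V : E → ℝ} {c d : ℝ}
    (hd : 0 < d) (hc : 0 < c) (hcV : ∀ y, c * ‖y‖ ^ d ≤ V y) {y : E} {r : ℝ} (hr : 0 ≤ r)
    (hy : V y ≤ c * r ^ d) : ‖y‖ ≤ r :=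
  (Real.rpow_le_rpow_iff (norm_nonneg y) hr hd).1 (le_of_mul_le_mul_left ((hcV y).trans hy) hc)

structure IsHomogeneousPosDef {E : Type*} [NormedAddCommGroup E] [NormedSpace ℝ E] (V : E → ℝ)
    (d : ℝ) : Prop where
  degree_pos : 0 < d
  continuous : Continuous V
  map_zero : V 0 = 0
  pos : ∀ x, x ≠ 0 → 0 < V x
  map_smul : ∀ l : ℝ, 0 < l → ∀ x, V (l • x) = l ^ d * V x

namespace IsHomogeneousPosDef

variable {E : Type*} [NormedAddCommGroup E] [NormedSpace ℝ E] {V : E → ℝ} {d : ℝ}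

lemma nonneg (hV : IsHomogeneousPosDef V d) (x : E) : 0 ≤ V x := by
  rcases eq_or_ne x 0 with rfl | hx
  · exact hV.map_zero.ge
  · exact (hV.pos x hx).le

lemma exists_smul_eq_one (hV : IsHomogeneousPosDef V d) {x : E} (hx : x ≠ 0) :
    ∃ l : ℝ, 0 < l ∧ V (l • x) = 1 := by
  have hVx := hV.pos x hx
  refine ⟨(V x)⁻¹ ^ d⁻¹, Real.rpow_pos_of_pos (inv_pos.2 hVx) _, ?_⟩
  rw [hV.map_smul _ (Real.rpow_pos_of_pos (inv_pos.2 hVx) _),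
    Real.rpow_inv_rpow (inv_nonneg.2 hVx.le) hV.degree_pos.ne', inv_mul_cancel₀ hVx.ne']

lemma exists_pos_mul_norm_rpow_le [ProperSpace E] (hV : IsHomogeneousPosDef V d) :
    ∃ c > 0, ∀ y, c * ‖y‖ ^ d ≤ V y := by
  obtain ⟨c, hc, hcV⟩ := (isCompact_sphere (0 : E) 1).exists_forall_le'
    hV.continuous.continuousOn fun u hu => hV.pos u (Metric.ne_of_mem_sphere hu one_ne_zero)
  refine ⟨c, hc, fun y => ?_⟩
  rcases eq_or_ne y 0 with rfl | hy
  · simp [hV.map_zero, Real.zero_rpow hV.degree_pos.ne']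
  have hy' : 0 < ‖y‖ := norm_pos_iff.2 hy
  have hu : ‖y‖⁻¹ • y ∈ Metric.sphere (0 : E) 1 := by
    simp [norm_smul, hy'.ne']
  calc c * ‖y‖ ^ d ≤ V (‖y‖⁻¹ • y) * ‖y‖ ^ d := by gcongr; exact hcV _ hu
    _ = V y := by
      rw [mul_comm, ← hV.map_smul _ hy', smul_smul, mul_inv_cancel₀ hy'.ne', one_smul]

lemma isCompact_setOf_eq_one [ProperSpace E] (hV : IsHomogeneousPosDef V d) :
    IsCompact {x | V x = 1} := by
  obtain ⟨c, hc, hcV⟩ := hV.exists_pos_mul_norm_rpow_le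
  refine (isCompact_closedBall (0 : E) (c⁻¹ ^ d⁻¹)).of_isClosed_subset
    (isClosed_eq hV.continuous continuous_const) fun x hx => ?_
  rw [mem_closedBall_zero_iff]
  refine norm_le_of_le_mul_rpow hV.degree_pos hc hcV (by positivity) ?_
  rw [Real.rpow_inv_rpow (inv_nonneg.2 hc.le) hV.degree_pos.ne', mul_inv_cancel₀ hc.ne']
  exact hx.le

lemma exists_pos_mnorm_lt_one {n : ℕ} {V : (Fin n → ℝ) → ℝ} (hV : IsHomogeneousPosDef V d) :
    ∃ ε > 0, ∀ P : Matrix (Fin n) (Fin n) ℝ, (∀ x, V (P *ᵥ x) ≤ ε * V x) → mnorm P < 1 := by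
  obtain ⟨c, hc, hcV⟩ := hV.exists_pos_mul_norm_rpow_le
  set r : ℝ := ((n : ℝ) ^ 2 + 1)⁻¹ with hr
  set M := ∑ j, V (Pi.single j 1)
  have hM : 0 ≤ M := Finset.sum_nonneg fun j _ => hV.nonneg _
  refine ⟨c * r ^ d / (M + 1), by positivity, fun P hP => ?_⟩
  have hcol : ∀ j, ‖P *ᵥ Pi.single j 1‖ ≤ r := fun j =>
    norm_le_of_le_mul_rpow hV.degree_pos hc hcV (by positivity) <| calc
      V (P *ᵥ Pi.single j 1) ≤ c * r ^ d / (M + 1) * V (Pi.single j 1) := hP _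
      _ ≤ c * r ^ d / (M + 1) * (M + 1) := by
        gcongr
        linarith [Finset.single_le_sum (f := fun j => V (Pi.single j 1))
          (fun j _ => hV.nonneg _) (Finset.mem_univ j)]
      _ = c * r ^ d := div_mul_cancel₀ _ (by positivity)
  have hentry : ∀ i j, |P i j| ≤ r := fun i j => by
    simpa [mulVec_single_one] using (norm_le_pi_norm (P *ᵥ Pi.single j 1) i).trans (hcol j)
  calc mnorm P ≤ ∑ _i : Fin n, ∑ _j : Fin n, r :=
        Finset.sum_le_sum fun i _ => Finset.sum_le_sum fun j _ => hentry i j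
    _ = (n : ℝ) ^ 2 / ((n : ℝ) ^ 2 + 1) := by simp [hr, sq, div_eq_mul_inv, mul_assoc]
    _ < 1 := (div_lt_one (by positivity)).2 (lt_add_one _)

end IsHomogeneousPosDef

namespace SwitchedSystem

variable {n m : ℕ} (A : Fin m → Matrix (Fin n) (Fin n) ℝ) {V : (Fin n → ℝ) → ℝ} {d : ℝ}

lemma exists_uniform_contraction (hV : IsHomogeneousPosDef V d) {k : ℕ}
    (hk : ∀ x s, V x = 1 → V (trajectory A s x k) < 1) :
    ∃ η, 0 ≤ η ∧ η < 1 ∧ ∀ x s, V (trajectory A s x k) ≤ η * V x := by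
  have hcompact := hV.isCompact_setOf_eq_one.prod (isCompact_univ (X := ℕ → Fin m))
  have hcont := (hV.continuous.comp (continuous_trajectory A k)).neg
  -- `-a < 1` bounds `V (trajectory A s x k)` on the compact set `{V = 1} × (ℕ → Fin m)`
  obtain ⟨a, ha, hfa⟩ := hcompact.exists_forall_le' hcont.continuousOn
    fun p hp => neg_lt_neg (hk p.1 p.2 hp.1)
  refine ⟨max (-a) 0, le_max_right _ _, max_lt (by linarith) zero_lt_one, fun x s => ?_⟩
  rcases eq_or_ne x 0 with rfl | hx
  · simpa [hV.map_zero] using (congrArg V (trajectory_smul A s 0 0 k)).le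
  obtain ⟨l, hl, hlx⟩ := hV.exists_smul_eq_one hx
  have hbound : a ≤ -V (trajectory A s (l • x) k) := hfa (l • x, s) ⟨hlx, trivial⟩
  rw [hV.map_smul l hl] at hlx
  rw [trajectory_smul, hV.map_smul l hl] at hbound
  refine le_of_mul_le_mul_left ?_ (Real.rpow_pos_of_pos hl d)
  calc l ^ d * V (trajectory A s x k) ≤ -a := by linarith
    _ ≤ max (-a) 0 := le_max_left _ _
    _ = l ^ d * (max (-a) 0 * V x) := by rw [mul_left_comm, hlx, mul_one]

lemma apply_trajectory_mul_le {k : ℕ} {η : ℝ} (hη : 0 ≤ η)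
    (h : ∀ x s, V (trajectory A s x k) ≤ η * V x) (s : ℕ → Fin m) (x : Fin n → ℝ) (j : ℕ) :
    V (trajectory A s x (j * k)) ≤ η ^ j * V x := by
  induction j with
  | zero => simp [trajectory]
  | succ j ih =>
    calc V (trajectory A s x ((j + 1) * k))
        = V (trajectory A (fun r => s (j * k + r)) (trajectory A s x (j * k)) k) := by
          rw [Nat.succ_mul, trajectory_add]
      _ ≤ η * V (trajectory A s x (j * k)) := h _ _
      _ ≤ η * (η ^ j * V x) := by gcongr
      _ = η ^ (j + 1) * V x := by ring

lemma exists_trajectory_eq_one (hm : 0 < m) (hjsr : 1 ≤ jsr A) (hV : IsHomogeneousPosDef V d)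
    (hdec : ∀ i x, V (A i *ᵥ x) ≤ V x) (k : ℕ) :
    ∃ x s, V x = 1 ∧ V (trajectory A s x (k + 1)) = 1 := by
  by_contra! h
  obtain ⟨η, hη0, hη1, hη⟩ := exists_uniform_contraction A hV fun x s hx =>
    lt_of_le_of_ne (hx ▸ antitone_trajectory A hdec s x (Nat.zero_le _)) (h x s hx)
  obtain ⟨ε, hε, hmnorm⟩ := hV.exists_pos_mnorm_lt_one
  obtain ⟨N, hN⟩ := exists_pow_lt_of_lt_one hε hη1
  obtain ⟨w, hw⟩ := exists_one_le_mnorm_wordProd hm A hjsr (k := (N + 1) * (k + 1)) (by positivity)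
  refine hw.not_gt (hmnorm _ fun x => ?_)
  rw [← trajectory_seqOfWord A hm]
  calc V (trajectory A (seqOfWord hm w) x ((N + 1) * (k + 1))) ≤ η ^ (N + 1) * V x :=
        apply_trajectory_mul_le A hη0 hη _ x (N + 1)
    _ ≤ ε * V x := by
      gcongr
      · exact hV.nonneg x
      · exact (pow_le_pow_of_le_one hη0 hη1.le N.le_succ).trans hN.le

theorem exists_forall_trajectory_eq_one (hm : 0 < m) (hjsr : 1 ≤ jsr A)
    (hV : IsHomogeneousPosDef V d) (hdec : ∀ i x, V (A i *ᵥ x) ≤ V x) :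
    ∃ x s, V x = 1 ∧ ∀ t, V (trajectory A s x t) = 1 := by
  let T (t : ℕ) : Set ((Fin n → ℝ) × (ℕ → Fin m)) :=
    {p | V p.1 = 1 ∧ V (trajectory A p.2 p.1 t) = 1}
  have hclosed (t : ℕ) : IsClosed (T t) :=
    (isClosed_eq (hV.continuous.comp continuous_fst) continuous_const).inter
      (isClosed_eq (hV.continuous.comp (continuous_trajectory A t)) continuous_const)
  have hstep (t : ℕ) : T (t + 1) ⊆ T t := fun p ⟨h0, ht⟩ =>
    ⟨h0, le_antisymm (h0 ▸ antitone_trajectory A hdec p.2 p.1 (Nat.zero_le t))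
      (ht ▸ antitone_trajectory A hdec p.2 p.1 t.le_succ)⟩
  have hnonempty (t : ℕ) : (T t).Nonempty :=
    let ⟨x, s, hx⟩ := exists_trajectory_eq_one A hm hjsr hV hdec t
    ⟨(x, s), hstep t hx⟩
  have hcompact : IsCompact (T 0) :=
    (hV.isCompact_setOf_eq_one.prod isCompact_univ).of_isClosed_subset (hclosed 0)
      fun p hp => ⟨hp.1, trivial⟩
  obtain ⟨⟨x, s⟩, hxs⟩ := IsCompact.nonempty_iInter_of_sequence_nonempty_isCompact_isClosed
    T hstep hnonempty hcompact hclosed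
  rw [Set.mem_iInter] at hxs
  exact ⟨x, s, (hxs 0).1, fun t => (hxs t).2⟩

end SwitchedSystem

open SwitchedSystem

/-- If ρ(Σ) = 1 and V is a continuous, positive definite, homogeneous nonincreasing
Lyapunov function, then there is a point on the unit level set of V and an infinite
switching sequence along which V stays equal to one. -/
theorem stmt_11 {n m : ℕ} (hm : 0 < m) (A : Fin m → Matrix (Fin n) (Fin n) ℝ)
    (V : (Fin n → ℝ) → ℝ) (d : ℝ) (hd : 0 < d)
    (hcont : Continuous V) (hV0 : V 0 = 0)
    (hpos : ∀ x : Fin n → ℝ, x ≠ 0 → 0 < V x)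
    (hhom : ∀ (l : ℝ), 0 < l → ∀ x, V (l • x) = l ^ d * V x)
    (hjsr : jsr A = 1)
    (hdec : ∀ (i : Fin m) (x : Fin n → ℝ), V ((A i).mulVec x) ≤ V x) :
    ∃ (xstar : Fin n → ℝ), V xstar = 1 ∧
      ∃ (seq : ℕ → Fin m) (x : ℕ → (Fin n → ℝ)),
        x 0 = xstar ∧ (∀ t, x (t + 1) = (A (seq t)).mulVec (x t)) ∧
        ∀ t, V (x t) = 1 := by
  obtain ⟨x, s, hx, hs⟩ := exists_forall_trajectory_eq_one A hm hjsr.ge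
    ⟨hd, hcont, hV0, hpos, hhom⟩ hdec
  exact ⟨x, hx, s, trajectory A s x, rfl, fun _ => rfl, hs⟩
end

section
/- Let A₁ and A₂ be real 2×2 matrices such that A₁ has rank 1 (its rows span a line) and suppose V: ℝ² → ℝ is a nonzero homogeneous polynomial of degree d with maximum coefficient equal to 1 that satisfies V(A_i x) ≤ V(x) for all x and i ∈ {1,2}, V(x) ≥ 0 everywhere. If there exists a unit vector x with V(x) = 0 and if the normalized forward orbit {Ax/‖Ax‖ : A a product of A₁,A₂ with Ax ≠ 0} of x is infinite, then V is identically zero — contradiction; hence V is positive definite. -/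
open Matrix

/-- The Euclidean norm on ℝⁿ. -/
noncomputable def enorm₂ {n : ℕ} (x : Fin n → ℝ) : ℝ :=
  Real.sqrt (∑ i, x i ^ 2)

/-!
If `V(x) = 0` for some `x ≠ 0`, then `V` vanishes along the whole forward orbit of `x`
(it is nonincreasing under `A₁, A₂` and nonnegative), hence by homogeneity on the whole
normalized orbit. But a nonzero binary form has only finitely many zeros on the unit circle:
off the line `ℝ (1, 0)` they lie on lines `ℝ (t, 1)` with `t` a root of the dehomogenization
`V(t, 1)`, which is a nonzero polynomial because `V` is its homogenization.
-/

open Polynomial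

lemma enorm₂_pos {n : ℕ} {x : Fin n → ℝ} (hx : x ≠ 0) : 0 < enorm₂ x := by
  obtain ⟨i, hi⟩ := Function.ne_iff.mp hx
  exact Real.sqrt_pos.mpr <| (pow_two_pos_of_ne_zero hi).trans_le <|
    Finset.single_le_sum (fun j _ => sq_nonneg (x j)) (Finset.mem_univ i)

lemma enorm₂_smul {n : ℕ} (c : ℝ) (x : Fin n → ℝ) : enorm₂ (c • x) = |c| * enorm₂ x := by
  simp only [enorm₂, Pi.smul_apply, smul_eq_mul, mul_pow, ← Finset.mul_sum]
  rw [Real.sqrt_mul (sq_nonneg c), Real.sqrt_sq_eq_abs]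

lemma enorm₂_inv_smul_self {n : ℕ} {x : Fin n → ℝ} (hx : x ≠ 0) :
    enorm₂ ((enorm₂ x)⁻¹ • x) = 1 := by
  have := enorm₂_pos hx
  rw [enorm₂_smul, abs_of_pos (inv_pos.mpr this), inv_mul_cancel₀ this.ne']

lemma smul_mem_of_enorm₂_smul_eq_one {n : ℕ} {c : ℝ} {w : Fin n → ℝ}
    (h : enorm₂ (c • w) = 1) :
    c • w ∈ ({(enorm₂ w)⁻¹ • w, -((enorm₂ w)⁻¹ • w)} : Set (Fin n → ℝ)) := by
  rw [enorm₂_smul] at h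
  have habs : |c| = (enorm₂ w)⁻¹ := eq_inv_of_mul_eq_one_left h
  rw [Set.mem_insert_iff, Set.mem_singleton_iff, ← habs]
  rcases abs_choice c with hc | hc
  · left; rw [hc]
  · right; rw [hc, neg_smul, neg_neg]

namespace MvPolynomial.IsHomogeneous

lemma eval_smul {R σ : Type*} [CommSemiring R] {φ : MvPolynomial σ R} {n : ℕ}
    (hφ : φ.IsHomogeneous n) (c : R) (x : σ → R) :
    eval (c • x) φ = c ^ n * eval x φ := by
  rw [eval_eq, eval_eq, Finset.mul_sum]
  refine Finset.sum_congr rfl fun s hs => ?_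
  have hdeg : ∑ i ∈ s.support, s i = n := by
    rw [← hφ (mem_support_iff.mp hs), Finsupp.weight_apply, Finsupp.sum]
    simp
  simp only [Pi.smul_apply, smul_eq_mul, mul_pow, Finset.prod_mul_distrib,
    Finset.prod_pow_eq_pow_sum, hdeg]
  ring

lemma eval_eq_pow_mul_eval_aeval {K : Type*} [Field K] {φ : MvPolynomial (Fin 2) K} {n : ℕ}
    (hφ : φ.IsHomogeneous n) (x : Fin 2 → K) (hx : x 1 ≠ 0) :
    eval x φ = x 1 ^ n * (MvPolynomial.aeval ![Polynomial.X, 1] φ).eval (x 0 / x 1) := by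
  have hx' : x = x 1 • ![x 0 / x 1, 1] := by
    ext i; fin_cases i <;> simp; field_simp
  conv_lhs => rw [hx', hφ.eval_smul]
  congr 1
  have hX : (fun i => Polynomial.aeval (x 0 / x 1) (![(Polynomial.X : K[X]), 1] i)) =
      ![x 0 / x 1, 1] := by
    funext i; fin_cases i <;> simp
  rw [← Polynomial.coe_aeval_eq_eval, ← AlgHom.comp_apply, comp_aeval, hX]
  rfl

lemma aeval_X_one_ne_zero {R : Type*} [CommSemiring R] {φ : MvPolynomial (Fin 2) R} {n : ℕ}
    (hφ : φ.IsHomogeneous n) (h0 : φ ≠ 0) :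
    MvPolynomial.aeval ![(Polynomial.X : R[X]), 1] φ ≠ 0 := by
  intro h
  rw [← Polynomial.homogenize_eq_of_isHomogeneous hφ h, Polynomial.homogenize_zero] at h0
  exact h0 rfl

end MvPolynomial.IsHomogeneous

open MvPolynomial in
theorem finite_setOf_enorm₂_eq_one_eval_eq_zero {p : MvPolynomial (Fin 2) ℝ} {d : ℕ}
    (hp : p.IsHomogeneous d) (hp0 : p ≠ 0) :
    {y : Fin 2 → ℝ | enorm₂ y = 1 ∧ eval y p = 0}.Finite := by
  set r := MvPolynomial.aeval ![(X : ℝ[X]), 1] p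
  let unitVecs (w : Fin 2 → ℝ) : Set (Fin 2 → ℝ) := {(enorm₂ w)⁻¹ • w, -((enorm₂ w)⁻¹ • w)}
  have hfin : (unitVecs ![1, 0] ∪ ⋃ t ∈ {t | r.IsRoot t}, unitVecs ![t, 1]).Finite :=
    (Set.toFinite _).union <| (finite_setOfPred_isRoot (hp.aeval_X_one_ne_zero hp0)).biUnion
      fun _ _ => Set.toFinite _
  refine hfin.subset fun y ⟨hy1, hy0⟩ => ?_
  by_cases hy : y 1 = 0
  · left
    have hyw : y = y 0 • ![1, 0] := by ext i; fin_cases i <;> simp [hy]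
    rw [hyw] at hy1 ⊢
    exact smul_mem_of_enorm₂_smul_eq_one hy1
  · right
    have hyw : y = y 1 • ![y 0 / y 1, 1] := by ext i; fin_cases i <;> simp; field_simp
    have hroot : r.IsRoot (y 0 / y 1) := by
      rw [hp.eval_eq_pow_mul_eval_aeval y hy] at hy0
      exact (mul_eq_zero.mp hy0).resolve_left (pow_ne_zero d hy)
    rw [hyw] at hy1 ⊢
    exact Set.mem_biUnion hroot (smul_mem_of_enorm₂_smul_eq_one hy1)

theorem Matrix.apply_list_prod_mulVec_le {n R α : Type*} [Fintype n] [DecidableEq n]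
    [Semiring R] [Preorder α] {f : (n → R) → α} {S : Matrix n n R → Prop}
    (hS : ∀ B, S B → ∀ x, f (B *ᵥ x) ≤ f x) :
    ∀ l : List (Matrix n n R), (∀ B ∈ l, S B) → ∀ x, f (l.prod *ᵥ x) ≤ f x
  | [], _, x => by rw [List.prod_nil, one_mulVec]
  | B :: l, hl, x => by
    rw [List.prod_cons, ← mulVec_mulVec]
    exact (hS B (hl B List.mem_cons_self) _).trans
      (apply_list_prod_mulVec_le hS l (fun C hC => hl C (List.mem_cons_of_mem _ hC)) x)

theorem stmt_19_general (A₁ A₂ : Matrix (Fin 2) (Fin 2) ℝ)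
    (p : MvPolynomial (Fin 2) ℝ) (d : ℕ) (hhom : p.IsHomogeneous d)
    (hcoeff_max : ∃ s, p.coeff s = 1)
    (hnonneg : ∀ x : Fin 2 → ℝ, 0 ≤ MvPolynomial.eval x p)
    (hdec : ∀ x : Fin 2 → ℝ,
      MvPolynomial.eval (A₁.mulVec x) p ≤ MvPolynomial.eval x p ∧
      MvPolynomial.eval (A₂.mulVec x) p ≤ MvPolynomial.eval x p)
    (horbit : ∀ x : Fin 2 → ℝ, enorm₂ x = 1 → MvPolynomial.eval x p = 0 →
      Set.Infinite {y : Fin 2 → ℝ |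
        ∃ l : List (Matrix (Fin 2) (Fin 2) ℝ), l ≠ [] ∧
          (∀ B ∈ l, B = A₁ ∨ B = A₂) ∧ l.prod.mulVec x ≠ 0 ∧
          y = (enorm₂ (l.prod.mulVec x))⁻¹ • l.prod.mulVec x}) :
    ∀ x : Fin 2 → ℝ, x ≠ 0 → 0 < MvPolynomial.eval x p := by
  intro x hx
  have hp0 : p ≠ 0 := by
    rintro rfl
    obtain ⟨s, hs⟩ := hcoeff_max
    simp at hs
  have hprod_le := Matrix.apply_list_prod_mulVec_le (f := fun v => MvPolynomial.eval v p)
    (S := fun B => B = A₁ ∨ B = A₂) fun B hB v => by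
      rcases hB with rfl | rfl
      exacts [(hdec v).1, (hdec v).2]
  refine (hnonneg x).lt_of_ne fun hx0 => ?_
  set u := (enorm₂ x)⁻¹ • x
  have hu0 : MvPolynomial.eval u p = 0 := by rw [hhom.eval_smul, ← hx0, mul_zero]
  refine horbit u (enorm₂_inv_smul_self hx) hu0
    ((finite_setOf_enorm₂_eq_one_eval_eq_zero hhom hp0).subset ?_)
  rintro _ ⟨l, -, hl, hlu, rfl⟩
  have hlu0 : MvPolynomial.eval (l.prod *ᵥ u) p = 0 :=
    le_antisymm ((hprod_le l hl u).trans_eq hu0) (hnonneg _)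
  exact ⟨enorm₂_inv_smul_self hlu, by rw [hhom.eval_smul, hlu0, mul_zero]⟩

/-- Let V be a nonzero homogeneous polynomial of degree d in two variables, with
maximum coefficient equal to 1, nonnegative everywhere, and nonincreasing along the
matrices A₁ (of rank one) and A₂. If every unit vector at which V vanishes has an
infinite normalized forward orbit under products of A₁ and A₂, then V is positive
definite. -/
theorem stmt_19 (A₁ A₂ : Matrix (Fin 2) (Fin 2) ℝ) (hrank : A₁.rank = 1)
    (p : MvPolynomial (Fin 2) ℝ) (d : ℕ) (hhom : p.IsHomogeneous d)
    (hcoeff_le : ∀ s, p.coeff s ≤ 1) (hcoeff_max : ∃ s, p.coeff s = 1)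
    (hnonneg : ∀ x : Fin 2 → ℝ, 0 ≤ MvPolynomial.eval x p)
    (hdec : ∀ x : Fin 2 → ℝ,
      MvPolynomial.eval (A₁.mulVec x) p ≤ MvPolynomial.eval x p ∧
      MvPolynomial.eval (A₂.mulVec x) p ≤ MvPolynomial.eval x p)
    (horbit : ∀ x : Fin 2 → ℝ, enorm₂ x = 1 → MvPolynomial.eval x p = 0 →
      Set.Infinite {y : Fin 2 → ℝ |
        ∃ l : List (Matrix (Fin 2) (Fin 2) ℝ), l ≠ [] ∧
          (∀ B ∈ l, B = A₁ ∨ B = A₂) ∧ l.prod.mulVec x ≠ 0 ∧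
          y = (enorm₂ (l.prod.mulVec x))⁻¹ • l.prod.mulVec x}) :
    ∀ x : Fin 2 → ℝ, x ≠ 0 → 0 < MvPolynomial.eval x p :=
  stmt_19_general A₁ A₂ p d hhom hcoeff_max hnonneg hdec horbit
end
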